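/- arXiv:2605.05024 — 4 statements merged into one kernel-verified Lean document; each statement's English description precedes it below -/
import Mathlib

section
/- Let L_V be a symmetric positive semidefinite n×n real matrix with eigenvalues λ₁,…,λₙ ≥ 0, and L_E a symmetric positive semidefinite m×m real matrix with eigenvalues μ₁,…,μ_m ≥ 0. Let Π_V and Π_E be the orthogonal projections onto ker(L_V) and ker(L_E) respectively, let Z₀ ∈ ℝ^{n×m}, and define Z_s := exp(−s·L_V)·Z₀·exp(−s·L_E). Suppose there exists at least one pair (i, j) with λᵢ + μⱼ > 0, and set η := min{λᵢ + μⱼ : λᵢ + μⱼ > 0} > 0. Then for all s ≥ 0, ‖Z_s − Π_V·Z₀·Π_E‖_F ≤ e^{−η·s}·‖Z₀‖_F; in particular Z_s → Π_V·Z₀·Π_E as s → ∞. -/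
open Matrix

/-!
In the eigenbases `U`, `V`, both heat semigroups and both kernel projections are diagonal, so in
the coordinates `Y = Uᵀ Z₀ V` the residual `Z_s - Π_V Z₀ Π_E` is the Hadamard product of `Y` with
the coefficients `e^{-s(λᵢ+μⱼ)} - 𝟙[λᵢ = 0] 𝟙[μⱼ = 0]`. Since `λᵢ, μⱼ ≥ 0`, such a coefficient
vanishes when `λᵢ + μⱼ = 0` and is at most `e^{-ηs}` otherwise. The Frobenius norm is invariant
under orthogonal conjugation, which transfers the bound back, and it dominates every entry, which
gives the entrywise limit.
-/

namespace Matrix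

variable {m n : Type*} [Fintype m] [Fintype n]

theorem trace_transpose_mul_self_eq_sum_sq (A : Matrix m n ℝ) :
    (Aᵀ * A).trace = ∑ i, ∑ j, A i j ^ 2 := by
  rw [Finset.sum_comm]
  simp [trace, mul_apply, sq]

theorem sq_apply_le_trace_transpose_mul_self (A : Matrix m n ℝ) (i : m) (j : n) :
    A i j ^ 2 ≤ (Aᵀ * A).trace := by
  rw [trace_transpose_mul_self_eq_sum_sq]
  calc A i j ^ 2 ≤ ∑ j', A i j' ^ 2 :=
        Finset.single_le_sum (fun _ _ => sq_nonneg _) (Finset.mem_univ j)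
    _ ≤ ∑ i', ∑ j', A i' j' ^ 2 :=
        Finset.single_le_sum (f := fun i' => ∑ j', A i' j' ^ 2)
          (fun _ _ => Finset.sum_nonneg fun _ _ => sq_nonneg _) (Finset.mem_univ i)

theorem abs_apply_le_sqrt_trace_transpose_mul_self (A : Matrix m n ℝ) (i : m) (j : n) :
    |A i j| ≤ √(Aᵀ * A).trace := by
  rw [← Real.sqrt_sq_eq_abs]
  exact Real.sqrt_le_sqrt (sq_apply_le_trace_transpose_mul_self A i j)

theorem trace_transpose_mul_self_orthogonal_conj {R : Type*} [CommRing R] [DecidableEq m]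
    [DecidableEq n] {U : Matrix m m R} {V : Matrix n n R} (hU : Uᵀ * U = 1) (hV : Vᵀ * V = 1)
    (A : Matrix m n R) :
    ((U * A * Vᵀ)ᵀ * (U * A * Vᵀ)).trace = (Aᵀ * A).trace := by
  have hUA : Uᵀ * (U * (A * Vᵀ)) = A * Vᵀ := by rw [← Matrix.mul_assoc, hU, Matrix.one_mul]
  rw [transpose_mul, transpose_mul, transpose_transpose]
  simp only [Matrix.mul_assoc]
  rw [hUA, trace_mul_comm, Matrix.mul_assoc, Matrix.mul_assoc, hV, Matrix.mul_one]

theorem sqrt_trace_hadamard_le {C Y : Matrix m n ℝ} {r : ℝ} (hr : 0 ≤ r)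
    (hC : ∀ i j, |C i j| ≤ r) :
    √((C ⊙ Y)ᵀ * (C ⊙ Y)).trace ≤ r * √(Yᵀ * Y).trace := by
  have hsum : ((C ⊙ Y)ᵀ * (C ⊙ Y)).trace ≤ r ^ 2 * (Yᵀ * Y).trace := by
    simp only [trace_transpose_mul_self_eq_sum_sq, hadamard_apply, Finset.mul_sum, mul_pow]
    gcongr ∑ i, ∑ j, ?_ * _ with i _ j _
    exact sq_le_sq' (abs_le.mp (hC i j)).1 (abs_le.mp (hC i j)).2
  calc √((C ⊙ Y)ᵀ * (C ⊙ Y)).trace ≤ √(r ^ 2 * (Yᵀ * Y).trace) := Real.sqrt_le_sqrt hsum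
    _ = r * √(Yᵀ * Y).trace := by rw [Real.sqrt_mul (sq_nonneg r), Real.sqrt_sq hr]

theorem diagonal_mul_mul_diagonal_sub {R : Type*} [CommRing R] [DecidableEq m] [DecidableEq n]
    (a c : m → R) (b d : n → R) (Y : Matrix m n R) :
    diagonal a * Y * diagonal b - diagonal c * Y * diagonal d =
      of (fun i j => a i * b j - c i * d j) ⊙ Y := by
  ext i j
  simp only [sub_apply, diagonal_mul, mul_diagonal, hadamard_apply, of_apply]
  ring

theorem exp_neg_smul_orthogonal_conj_diagonal [DecidableEq m] {U : Matrix m m ℝ}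
    (hU : Uᵀ * U = 1) (d : m → ℝ) (s : ℝ) :
    NormedSpace.exp (-(s • (U * diagonal d * Uᵀ))) =
      U * diagonal (fun i => Real.exp (-(s * d i))) * Uᵀ := by
  have hinv : U⁻¹ = Uᵀ := inv_eq_left_inv hU
  have hUnit : IsUnit U := IsUnit.of_mul_eq_one_right _ hU
  have hconj : -(s • (U * diagonal d * Uᵀ)) = U * diagonal (fun i => -(s * d i)) * U⁻¹ := by
    have hdiag : diagonal (fun i => -(s * d i)) = -(s • diagonal d) := by
      rw [← diagonal_smul, ← diagonal_neg]
      rfl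
    rw [hinv, hdiag, Matrix.mul_neg, Matrix.neg_mul, Matrix.mul_smul, Matrix.smul_mul]
  rw [hconj, exp_conj U _ hUnit, exp_diagonal, hinv]
  congr 3
  funext i
  rw [Pi.coe_exp, ← Real.exp_eq_exp_ℝ]

theorem orthogonal_conj_mul_mul_orthogonal_conj {R : Type*} [CommRing R] [DecidableEq m]
    [DecidableEq n] {U : Matrix m m R} {V : Matrix n n R} (hU : Uᵀ * U = 1) (hV : Vᵀ * V = 1)
    (A : Matrix m m R) (Y : Matrix m n R) (B : Matrix n n R) :
    U * A * Uᵀ * (U * Y * Vᵀ) * (V * B * Vᵀ) = U * (A * Y * B) * Vᵀ := by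
  simp only [Matrix.mul_assoc]
  rw [← Matrix.mul_assoc Uᵀ, hU, Matrix.one_mul, ← Matrix.mul_assoc Vᵀ, hV, Matrix.one_mul]

end Matrix

theorem abs_exp_mul_exp_sub_ite_le {a b η s : ℝ} (ha : 0 ≤ a) (hb : 0 ≤ b) (hs : 0 ≤ s)
    (hgap : 0 < a + b → η ≤ a + b) :
    |Real.exp (-(s * a)) * Real.exp (-(s * b)) -
        (if a = 0 then 1 else 0) * (if b = 0 then 1 else 0)| ≤ Real.exp (-(η * s)) := by
  rcases (add_nonneg ha hb).eq_or_lt with hab | hab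
  · obtain ⟨rfl, rfl⟩ : a = 0 ∧ b = 0 := ⟨by linarith, by linarith⟩
    simpa using (Real.exp_pos _).le
  · have hab0 : ¬(a = 0 ∧ b = 0) := fun ⟨ha0, hb0⟩ => by simp [ha0, hb0] at hab
    have hite : (if a = 0 then (1 : ℝ) else 0) * (if b = 0 then 1 else 0) = 0 := by
      split_ifs <;> simp_all
    rw [hite, sub_zero, ← Real.exp_add, abs_of_pos (Real.exp_pos _), Real.exp_le_exp]
    nlinarith [hgap hab]

open Filter Topology in
theorem tendsto_apply_of_sqrt_trace_le_exp {m n : Type*} [Fintype m] [Fintype n]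
    {Z : ℝ → Matrix m n ℝ} {A : Matrix m n ℝ} {η C : ℝ} (hη : 0 < η)
    (hZ : ∀ s, 0 ≤ s → √((Z s - A)ᵀ * (Z s - A)).trace ≤ Real.exp (-(η * s)) * C)
    (i : m) (j : n) :
    Tendsto (fun s => Z s i j) atTop (𝓝 (A i j)) := by
  have hdecay : Tendsto (fun s => Real.exp (-(η * s)) * C) atTop (𝓝 0) := by
    simpa using (Real.tendsto_exp_neg_atTop_nhds_zero.comp
      (tendsto_id.const_mul_atTop hη)).mul_const C
  rw [tendsto_iff_norm_sub_tendsto_zero]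
  refine squeeze_zero' (Eventually.of_forall fun _ => norm_nonneg _) ?_ hdecay
  filter_upwards [eventually_ge_atTop 0] with s hs
  exact (abs_apply_le_sqrt_trace_transpose_mul_self (Z s - A) i j).trans (hZ s hs)

/-- Pure-heat limit: for symmetric PSD `L_V = U Λ Uᵀ`, `L_E = V M Vᵀ` with nonnegative
eigenvalues and spectral gap `η = min{λᵢ + μⱼ : λᵢ + μⱼ > 0}`, the two-sided heat flow
`Z_s = exp(-s L_V) Z₀ exp(-s L_E)` converges exponentially at rate `η` to `Π_V Z₀ Π_E`,
where `Π_V`, `Π_E` are the orthogonal projections onto the kernels: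
`‖Z_s - Π_V Z₀ Π_E‖_F ≤ e^{-ηs} ‖Z₀‖_F`, and `Z_s → Π_V Z₀ Π_E` as `s → ∞`. -/
theorem heat_flow_pure_heat_limit {n m : ℕ}
    (LV U : Matrix (Fin n) (Fin n) ℝ) (lam : Fin n → ℝ)
    (LE V : Matrix (Fin m) (Fin m) ℝ) (mu : Fin m → ℝ)
    (hU : Uᵀ * U = 1) (hV : Vᵀ * V = 1)
    (hLV : LV = U * Matrix.diagonal lam * Uᵀ)
    (hLE : LE = V * Matrix.diagonal mu * Vᵀ)
    (hlam : ∀ i, 0 ≤ lam i) (hmu : ∀ j, 0 ≤ mu j)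
    (PV : Matrix (Fin n) (Fin n) ℝ)
    (hPV : PV = U * Matrix.diagonal (fun i => if lam i = 0 then (1 : ℝ) else 0) * Uᵀ)
    (PE : Matrix (Fin m) (Fin m) ℝ)
    (hPE : PE = V * Matrix.diagonal (fun j => if mu j = 0 then (1 : ℝ) else 0) * Vᵀ)
    (η : ℝ)
    (hη : IsLeast {r : ℝ | (∃ i j, r = lam i + mu j) ∧ 0 < r} η)
    (Z₀ : Matrix (Fin n) (Fin m) ℝ)
    (Z : ℝ → Matrix (Fin n) (Fin m) ℝ)
    (hZ : ∀ s : ℝ, Z s =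
      NormedSpace.exp (-(s • LV)) * Z₀ * NormedSpace.exp (-(s • LE))) :
    0 < η ∧
    (∀ s : ℝ, 0 ≤ s →
      Real.sqrt (((Z s - PV * Z₀ * PE)ᵀ * (Z s - PV * Z₀ * PE)).trace) ≤
        Real.exp (-(η * s)) * Real.sqrt ((Z₀ᵀ * Z₀).trace)) ∧
    (∀ (i : Fin n) (j : Fin m),
      Filter.Tendsto (fun s => Z s i j) Filter.atTop (nhds ((PV * Z₀ * PE) i j))) := by
  obtain ⟨⟨-, hηpos⟩, hηle⟩ := hη
  obtain ⟨Y, rfl⟩ : ∃ Y, Z₀ = U * Y * Vᵀ := ⟨Uᵀ * Z₀ * V, by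
    simp only [← Matrix.mul_assoc, mul_eq_one_comm.mp hU, Matrix.one_mul]
    rw [Matrix.mul_assoc, mul_eq_one_comm.mp hV, Matrix.mul_one]⟩
  have hdiff : ∀ s, Z s - PV * (U * Y * Vᵀ) * PE = U * (of (fun i j =>
      Real.exp (-(s * lam i)) * Real.exp (-(s * mu j)) -
        (if lam i = 0 then 1 else 0) * (if mu j = 0 then 1 else 0)) ⊙ Y) * Vᵀ := fun s => by
    rw [hZ, hLV, hLE, hPV, hPE, exp_neg_smul_orthogonal_conj_diagonal hU,
      exp_neg_smul_orthogonal_conj_diagonal hV, orthogonal_conj_mul_mul_orthogonal_conj hU hV,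
      orthogonal_conj_mul_mul_orthogonal_conj hU hV, ← Matrix.sub_mul, ← Matrix.mul_sub,
      diagonal_mul_mul_diagonal_sub]
  have hbound : ∀ s : ℝ, 0 ≤ s →
      √((Z s - PV * (U * Y * Vᵀ) * PE)ᵀ * (Z s - PV * (U * Y * Vᵀ) * PE)).trace ≤
        Real.exp (-(η * s)) * √((U * Y * Vᵀ)ᵀ * (U * Y * Vᵀ)).trace := fun s hs => by
    rw [hdiff, trace_transpose_mul_self_orthogonal_conj hU hV,
      trace_transpose_mul_self_orthogonal_conj hU hV]
    exact sqrt_trace_hadamard_le (Real.exp_pos _).le fun i j =>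
      abs_exp_mul_exp_sub_ite_le (hlam i) (hmu j) hs fun h => hηle ⟨⟨i, j, rfl⟩, h⟩
  exact ⟨hηpos, hbound, tendsto_apply_of_sqrt_trace_le_exp hηpos hbound⟩
end

section
/- Let S > 0, let u, v : [0, S] × ℝ^{n×m} → ℝ^{n×m} be continuous drift fields, and let Y, Z : [0, S] → ℝ^{n×m} be differentiable paths satisfying Y′(t) = u(t, Y(t)) and Z′(t) = v(t, Z(t)) for all t ∈ [0, S]. Suppose u admits a continuous one-sided Lipschitz constant κ : [0, S] → ℝ, i.e., ⟨X − X′, u(t, X) − u(t, X′)⟩_F ≤ κ(t)·‖X − X′‖_F² for all X, X′ ∈ ℝ^{n×m} and t ∈ [0, S]. Define Λ(t) := ∫₀ᵗ (2·κ(r) + 1) dr. Then for every t ∈ [0, S], ‖Y(t) − Z(t)‖_F² ≤ e^{Λ(t)} · ( ‖Y(0) − Z(0)‖_F² + ∫₀ᵗ e^{−Λ(r)} · ‖u(r, Z(r)) − v(r, Z(r))‖_F² dr ). -/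
open Matrix

attribute [local instance] Matrix.frobeniusNormedAddCommGroup Matrix.frobeniusNormedSpace

open Set Real
open scoped InnerProductSpace

/-!
The difference `W = Y - Z` satisfies `W' = (u(t, Y) - u(t, Z)) + (u(t, Z) - v(t, Z))`. The
one-sided Lipschitz bound controls the first summand and Young's inequality the second, so
`(‖W‖²)' ≤ (2κ + 1) ‖W‖² + ‖u(t, Z) - v(t, Z)‖²`, and Grönwall's inequality in
integrating-factor form gives the claim. The Frobenius pairing `trace (Xᵀ Y)` is the inner
product of `n` stacked Euclidean rows, so the argument runs in a real inner product space.
-/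

namespace Matrix
variable {m n : Type*} [Fintype m] [Fintype n]

noncomputable def frobeniusIsometryEquiv :
    Matrix m n ℝ ≃ₗᵢ[ℝ] PiLp 2 (fun _ : m => EuclideanSpace ℝ n) where
  toFun A := WithLp.toLp 2 fun i => WithLp.toLp 2 (A i)
  invFun x i j := x i j
  map_add' _ _ := rfl
  map_smul' _ _ := rfl
  left_inv _ := rfl
  right_inv _ := rfl
  norm_map' _ := rfl

@[simp]
theorem frobeniusIsometryEquiv_apply (A : Matrix m n ℝ) (i : m) (j : n) :
    frobeniusIsometryEquiv A i j = A i j :=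
  rfl

theorem trace_transpose_mul_eq_inner (X Y : Matrix m n ℝ) :
    (Xᵀ * Y).trace = ⟪frobeniusIsometryEquiv X, frobeniusIsometryEquiv Y⟫_ℝ := by
  simp [trace, mul_apply, PiLp.inner_apply, Finset.sum_comm (γ := n), mul_comm]

theorem trace_transpose_mul_self_eq_sq_norm (X : Matrix m n ℝ) :
    (Xᵀ * X).trace = ‖X‖ ^ 2 := by
  rw [trace_transpose_mul_eq_inner, real_inner_self_eq_norm_sq, LinearIsometryEquiv.norm_map]

end Matrix

namespace ContinuousOn
variable {E : Type*} [NormedAddCommGroup E] [NormedSpace ℝ E] {f : ℝ → E} {a b : ℝ}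

theorem continuousOn_primitive (hf : ContinuousOn f (Icc a b)) :
    ContinuousOn (fun x => ∫ r in a..x, f r) (Icc a b) :=
  (intervalIntegral.continuousOn_primitive hf.integrableOn_Icc).congr fun _ hx =>
    intervalIntegral.integral_of_le hx.1

theorem hasDerivAt_primitive [CompleteSpace E] (hf : ContinuousOn f (Icc a b)) {t : ℝ}
    (ht : t ∈ Ioo a b) :
    HasDerivAt (fun x => ∫ r in a..x, f r) (f t) t :=
  intervalIntegral.integral_hasDerivAt_right
    ((hf.mono (Icc_subset_Icc le_rfl ht.2.le)).intervalIntegrable_of_Icc ht.1.le)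
    ((hf.mono Ioo_subset_Icc_self).stronglyMeasurableAtFilter isOpen_Ioo t ht)
    (hf.continuousAt (Icc_mem_nhds ht.1 ht.2))

end ContinuousOn

theorem le_exp_integral_mul_of_hasDerivAt_le {f φ φ' ψ : ℝ → ℝ} {a b : ℝ} (hab : a ≤ b)
    (hf : ContinuousOn f (Icc a b)) (hφ : ContinuousOn φ (Icc a b))
    (hψ : ContinuousOn ψ (Icc a b)) (hφ' : ∀ t ∈ Ioo a b, HasDerivAt φ (φ' t) t)
    (hle : ∀ t ∈ Ioo a b, φ' t ≤ f t * φ t + ψ t) :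
    φ b ≤ exp (∫ r in a..b, f r) * (φ a + ∫ r in a..b, exp (-∫ s in a..r, f s) * ψ r) := by
  set Λ := fun x => ∫ r in a..x, f r
  have hΛ : ContinuousOn Λ (Icc a b) := hf.continuousOn_primitive
  have hρ : ContinuousOn (fun r => exp (-Λ r) * ψ r) (Icc a b) := hΛ.neg.rexp.mul hψ
  -- the integrating factor `exp (-Λ)` turns the differential inequality into antitonicity
  set g := fun x => exp (-Λ x) * φ x - ∫ r in a..x, exp (-Λ r) * ψ r
  have hg : AntitoneOn g (Icc a b) := by
    refine antitoneOn_of_hasDerivWithinAt_nonpos (convex_Icc a b)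
      ((hΛ.neg.rexp.mul hφ).sub hρ.continuousOn_primitive)
      (f' := fun t => exp (-Λ t) * (φ' t - (f t * φ t + ψ t))) ?_ ?_ <;>
      rw [interior_Icc] <;> intro t ht
    · refine HasDerivAt.hasDerivWithinAt ?_
      convert ((hf.hasDerivAt_primitive ht).fun_neg.exp.fun_mul (hφ' t ht)).fun_sub
        (hρ.hasDerivAt_primitive ht) using 1
      ring
    · exact mul_nonpos_of_nonneg_of_nonpos (exp_pos _).le (sub_nonpos.2 (hle t ht))
  have hgb : exp (-Λ b) * φ b - ∫ r in a..b, exp (-Λ r) * ψ r ≤ φ a := by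
    simpa [g, Λ] using hg (left_mem_Icc.2 hab) (right_mem_Icc.2 hab) hab
  calc φ b = exp (Λ b) * (exp (-Λ b) * φ b) := by rw [← mul_assoc, ← exp_add]; simp
    _ ≤ _ := by gcongr; linarith

section InnerProductSpace

variable {E : Type*} [NormedAddCommGroup E] [InnerProductSpace ℝ E]

theorem two_inner_add_le_of_inner_le {w x y : E} {κ : ℝ} (h : ⟪w, x⟫_ℝ ≤ κ * ‖w‖ ^ 2) :
    2 * ⟪w, x + y⟫_ℝ ≤ (2 * κ + 1) * ‖w‖ ^ 2 + ‖y‖ ^ 2 := by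
  have hcs := real_inner_le_norm w y
  have hyoung := two_mul_le_add_sq ‖w‖ ‖y‖
  rw [inner_add_right]
  linarith

theorem sq_norm_le_of_hasDerivAt_eq_add {W A D : ℝ → E} {κ : ℝ → ℝ} {a b : ℝ} (hab : a ≤ b)
    (hκ : ContinuousOn κ (Icc a b)) (hD : ContinuousOn D (Icc a b))
    (hW : ∀ t ∈ Icc a b, HasDerivAt W (A t + D t) t)
    (hA : ∀ t ∈ Icc a b, ⟪W t, A t⟫_ℝ ≤ κ t * ‖W t‖ ^ 2) :
    ‖W b‖ ^ 2 ≤ exp (∫ r in a..b, (2 * κ r + 1)) *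
      (‖W a‖ ^ 2 + ∫ r in a..b, exp (-∫ s in a..r, (2 * κ s + 1)) * ‖D r‖ ^ 2) :=
  le_exp_integral_mul_of_hasDerivAt_le hab (by fun_prop)
    (fun t ht => (hW t ht).continuousAt.continuousWithinAt.norm.pow 2) (hD.norm.pow 2)
    (fun t ht => (hW t (Ioo_subset_Icc_self ht)).norm_sq)
    (fun t ht => two_inner_add_le_of_inner_le (hA t (Ioo_subset_Icc_self ht)))

end InnerProductSpace

theorem one_sided_lipschitz_stability_general {n m : ℕ}
    (S : ℝ)
    (u v : ℝ → Matrix (Fin n) (Fin m) ℝ → Matrix (Fin n) (Fin m) ℝ)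
    (hu_cont : ContinuousOn (fun q : ℝ × Matrix (Fin n) (Fin m) ℝ => u q.1 q.2)
      (Set.Icc 0 S ×ˢ Set.univ))
    (hv_cont : ContinuousOn (fun q : ℝ × Matrix (Fin n) (Fin m) ℝ => v q.1 q.2)
      (Set.Icc 0 S ×ˢ Set.univ))
    (Y Z : ℝ → Matrix (Fin n) (Fin m) ℝ)
    (hY : ∀ t ∈ Set.Icc (0 : ℝ) S, HasDerivAt Y (u t (Y t)) t)
    (hZ : ∀ t ∈ Set.Icc (0 : ℝ) S, HasDerivAt Z (v t (Z t)) t)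
    (κ : ℝ → ℝ) (hκc : ContinuousOn κ (Set.Icc 0 S))
    (hκ : ∀ (X X' : Matrix (Fin n) (Fin m) ℝ), ∀ t ∈ Set.Icc (0 : ℝ) S,
      ((X - X')ᵀ * (u t X - u t X')).trace ≤ κ t * ((X - X')ᵀ * (X - X')).trace)
    (Λ : ℝ → ℝ) (hΛ : Λ = fun t => ∫ r in (0 : ℝ)..t, (2 * κ r + 1)) :
    ∀ t ∈ Set.Icc (0 : ℝ) S,
      ((Y t - Z t)ᵀ * (Y t - Z t)).trace ≤
        Real.exp (Λ t) *
          (((Y 0 - Z 0)ᵀ * (Y 0 - Z 0)).trace +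
            ∫ r in (0 : ℝ)..t, Real.exp (-Λ r) *
              ((u r (Z r) - v r (Z r))ᵀ * (u r (Z r) - v r (Z r))).trace) := by
  subst hΛ
  intro t ht
  have hsub : Icc 0 t ⊆ Icc 0 S := Icc_subset_Icc le_rfl ht.2
  let e : Matrix (Fin n) (Fin m) ℝ ≃ₗᵢ[ℝ] _ := frobeniusIsometryEquiv
  have hZc : ContinuousOn Z (Icc 0 S) := fun s hs => (hZ s hs).continuousAt.continuousWithinAt
  have hdrift (w : ℝ → Matrix (Fin n) (Fin m) ℝ → Matrix (Fin n) (Fin m) ℝ)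
      (hw : ContinuousOn (fun q : ℝ × Matrix (Fin n) (Fin m) ℝ => w q.1 q.2) (Icc 0 S ×ˢ univ)) :
      ContinuousOn (fun r => w r (Z r)) (Icc 0 S) :=
    hw.comp (continuousOn_id.prodMk hZc) fun _ hr => ⟨hr, trivial⟩
  have key := sq_norm_le_of_hasDerivAt_eq_add (W := fun s => e (Y s - Z s))
    (A := fun s => e (u s (Y s) - u s (Z s))) (D := fun s => e (u s (Z s) - v s (Z s)))
    ht.1 (hκc.mono hsub)
    (e.continuous.comp_continuousOn (((hdrift u hu_cont).sub (hdrift v hv_cont)).mono hsub))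
    (fun s hs => by
      rw [← map_add, sub_add_sub_cancel]
      exact e.toContinuousLinearEquiv.hasFDerivAt.comp_hasDerivAt s
        ((hY s (hsub hs)).sub (hZ s (hsub hs))))
    (fun s hs => by
      rw [← trace_transpose_mul_eq_inner, e.norm_map, ← trace_transpose_mul_self_eq_sq_norm]
      exact hκ _ _ s (hsub hs))
  simpa only [e.norm_map, trace_transpose_mul_self_eq_sq_norm] using key

/-- Deterministic pathwise one-sided-Lipschitz stability bound: if `Y' = u(t, Y)`,
`Z' = v(t, Z)` on `[0, S]`, `u` has a continuous one-sided Lipschitz constant `κ`, and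
`Λ(t) = ∫₀ᵗ (2κ(r) + 1) dr`, then
`‖Y(t) - Z(t)‖_F² ≤ e^{Λ(t)} (‖Y(0) - Z(0)‖_F² + ∫₀ᵗ e^{-Λ(r)} ‖u(r,Z(r)) - v(r,Z(r))‖_F² dr)`.
Frobenius squared norms are written as `trace (Xᵀ X)`. -/
theorem one_sided_lipschitz_stability {n m : ℕ}
    (S : ℝ) (hS : 0 < S)
    (u v : ℝ → Matrix (Fin n) (Fin m) ℝ → Matrix (Fin n) (Fin m) ℝ)
    (hu_cont : ContinuousOn (fun q : ℝ × Matrix (Fin n) (Fin m) ℝ => u q.1 q.2)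
      (Set.Icc 0 S ×ˢ Set.univ))
    (hv_cont : ContinuousOn (fun q : ℝ × Matrix (Fin n) (Fin m) ℝ => v q.1 q.2)
      (Set.Icc 0 S ×ˢ Set.univ))
    (Y Z : ℝ → Matrix (Fin n) (Fin m) ℝ)
    (hY : ∀ t ∈ Set.Icc (0 : ℝ) S, HasDerivAt Y (u t (Y t)) t)
    (hZ : ∀ t ∈ Set.Icc (0 : ℝ) S, HasDerivAt Z (v t (Z t)) t)
    (κ : ℝ → ℝ) (hκc : ContinuousOn κ (Set.Icc 0 S))
    (hκ : ∀ (X X' : Matrix (Fin n) (Fin m) ℝ), ∀ t ∈ Set.Icc (0 : ℝ) S,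
      ((X - X')ᵀ * (u t X - u t X')).trace ≤ κ t * ((X - X')ᵀ * (X - X')).trace)
    (Λ : ℝ → ℝ) (hΛ : Λ = fun t => ∫ r in (0 : ℝ)..t, (2 * κ r + 1)) :
    ∀ t ∈ Set.Icc (0 : ℝ) S,
      ((Y t - Z t)ᵀ * (Y t - Z t)).trace ≤
        Real.exp (Λ t) *
          (((Y 0 - Z 0)ᵀ * (Y 0 - Z 0)).trace +
            ∫ r in (0 : ℝ)..t, Real.exp (-Λ r) *
              ((u r (Z r) - v r (Z r))ᵀ * (u r (Z r) - v r (Z r))).trace) :=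
  one_sided_lipschitz_stability_general S u v hu_cont hv_cont Y Z hY hZ κ hκc hκ Λ hΛ
end

section
/- Let H ∈ {0,1}^{n×m} be a binary matrix with every column sum strictly positive, and let P ∈ ℝ^{n×n}, Q ∈ ℝ^{m×m} be permutation matrices. Define D_E(H) := diag(Hᵀ·𝟙_n), A_E(H) := offdiag(D_E(H)^{−1/2}·Hᵀ·H·D_E(H)^{−1/2}) where offdiag sets diagonal entries to zero, D_ov(H) := diag(A_E(H)·𝟙_m) with inverse square root taken entrywise with zero assigned to zero diagonal entries, and L_E(H) := I_m − D_ov(H)^{−1/2}·A_E(H)·D_ov(H)^{−1/2}. Then both operators transform equivariantly: A_E(P·H·Qᵀ) = Q·A_E(H)·Qᵀ and L_E(P·H·Qᵀ) = Q·L_E(H)·Qᵀ. -/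
/-!
`P H Qᵀ` is `H` with rows reindexed by `σ` and columns by `τ`. Reindexing the rows changes
neither `Hᵀ H` nor the column sums, and reindexing the columns reindexes both by `τ`. Every further
ingredient (diagonal scalings by functions of column or row sums, products, `offdiag`, `I - ·`)
commutes with reindexing both axes by one bijection, so `A_E` and `L_E` are reindexed by `τ`,
which is conjugation by `Q`.
-/

open Matrix

namespace Matrix

variable {l m n R : Type*}

theorem permMatrix_mul_mul_transpose_permMatrix [Fintype m] [Fintype n] [DecidableEq m]
    [DecidableEq n] [NonAssocSemiring R] (σ : Equiv.Perm m) (τ : Equiv.Perm n)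
    (M : Matrix m n R) :
    σ.permMatrix R * M * (τ.permMatrix R)ᵀ = M.submatrix σ τ := by
  rw [transpose_permMatrix, PEquiv.toMatrix_toPEquiv_mul, PEquiv.mul_toMatrix_toPEquiv]
  rfl

def offDiag [Zero R] [DecidableEq n] (M : Matrix n n R) : Matrix n n R :=
  of fun j k => if j = k then 0 else M j k

theorem offDiag_submatrix_equiv [Zero R] [DecidableEq l] [DecidableEq n] (M : Matrix n n R)
    (e : l ≃ n) : offDiag (M.submatrix e e) = (offDiag M).submatrix e e := by
  ext j k
  simp only [offDiag, of_apply, submatrix_apply, e.injective.eq_iff]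

theorem diagonal_mul_mul_diagonal_submatrix_equiv [Fintype l] [Fintype n] [DecidableEq l]
    [DecidableEq n] [NonAssocSemiring R] (d : n → R) (M : Matrix n n R) (e : l ≃ n) :
    diagonal (d ∘ e) * M.submatrix e e * diagonal (d ∘ e) =
      (diagonal d * M * diagonal d).submatrix e e := by
  rw [← submatrix_diagonal_equiv, submatrix_mul_equiv, submatrix_mul_equiv]

end Matrix

section Hypergraph

variable {ι ι' κ κ' : Type*}

noncomputable def invSqrtColSum [Fintype ι] (H : Matrix ι κ ℝ) (j : κ) : ℝ :=
  1 / √(∑ i, H i j)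

noncomputable def invSqrtRowSum [Fintype κ] (M : Matrix κ κ ℝ) (j : κ) : ℝ :=
  if 0 < ∑ k, M j k then 1 / √(∑ k, M j k) else 0

/-- The paper's `A_E(H)`; its `L_E(H)` is `normalizedLaplacian (overlapMatrix H)`. -/
noncomputable def overlapMatrix [Fintype ι] [Fintype κ] [DecidableEq κ] (H : Matrix ι κ ℝ) :
    Matrix κ κ ℝ :=
  offDiag (diagonal (invSqrtColSum H) * (Hᵀ * H) * diagonal (invSqrtColSum H))

noncomputable def normalizedLaplacian [Fintype κ] [DecidableEq κ] (M : Matrix κ κ ℝ) :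
    Matrix κ κ ℝ :=
  1 - diagonal (invSqrtRowSum M) * M * diagonal (invSqrtRowSum M)

theorem invSqrtColSum_submatrix [Fintype ι] [Fintype ι'] (H : Matrix ι κ ℝ) (σ : ι' ≃ ι)
    (τ : κ' → κ) :
    invSqrtColSum (H.submatrix σ τ) = invSqrtColSum H ∘ τ :=
  funext fun j => congrArg (fun s => 1 / √s) (σ.sum_comp fun i => H i (τ j))

theorem invSqrtRowSum_submatrix [Fintype κ] [Fintype κ'] (M : Matrix κ κ ℝ) (τ : κ' ≃ κ) :
    invSqrtRowSum (M.submatrix τ τ) = invSqrtRowSum M ∘ τ :=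
  funext fun j => congrArg (fun s => if 0 < s then 1 / √s else 0) (τ.sum_comp (M (τ j)))

theorem overlapMatrix_submatrix [Fintype ι] [Fintype ι'] [Fintype κ] [Fintype κ'] [DecidableEq κ]
    [DecidableEq κ'] (H : Matrix ι κ ℝ) (σ : ι' ≃ ι) (τ : κ' ≃ κ) :
    overlapMatrix (H.submatrix σ τ) = (overlapMatrix H).submatrix τ τ := by
  rw [overlapMatrix, invSqrtColSum_submatrix, transpose_submatrix, submatrix_mul_equiv,
    diagonal_mul_mul_diagonal_submatrix_equiv, offDiag_submatrix_equiv, overlapMatrix]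

theorem normalizedLaplacian_submatrix [Fintype κ] [Fintype κ'] [DecidableEq κ]
    [DecidableEq κ'] (M : Matrix κ κ ℝ) (τ : κ' ≃ κ) :
    normalizedLaplacian (M.submatrix τ τ) = (normalizedLaplacian M).submatrix τ τ := by
  rw [normalizedLaplacian, invSqrtRowSum_submatrix, diagonal_mul_mul_diagonal_submatrix_equiv,
    ← submatrix_one_equiv τ]
  rfl

end Hypergraph

theorem overlap_laplacian_equivariant_general {n m : ℕ}
    (H : Matrix (Fin n) (Fin m) ℝ)
    (σ : Equiv.Perm (Fin n)) (τ : Equiv.Perm (Fin m))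
    (P : Matrix (Fin n) (Fin n) ℝ) (Q : Matrix (Fin m) (Fin m) ℝ)
    (hP : P = σ.permMatrix ℝ) (hQ : Q = τ.permMatrix ℝ)
    (AE : Matrix (Fin n) (Fin m) ℝ → Matrix (Fin m) (Fin m) ℝ)
    (hAE : ∀ A : Matrix (Fin n) (Fin m) ℝ,
      AE A = Matrix.of (fun j k =>
        if j = k then 0 else
          (Matrix.diagonal (fun j => 1 / Real.sqrt (∑ i, A i j)) * (Aᵀ * A) *
            Matrix.diagonal (fun j => 1 / Real.sqrt (∑ i, A i j))) j k))
    (LE : Matrix (Fin n) (Fin m) ℝ → Matrix (Fin m) (Fin m) ℝ)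
    (hLE : ∀ A : Matrix (Fin n) (Fin m) ℝ,
      LE A = 1 -
        Matrix.diagonal (fun j =>
            if 0 < ∑ k, AE A j k then 1 / Real.sqrt (∑ k, AE A j k) else 0) * AE A *
          Matrix.diagonal (fun j =>
            if 0 < ∑ k, AE A j k then 1 / Real.sqrt (∑ k, AE A j k) else 0)) :
    AE (P * H * Qᵀ) = Q * AE H * Qᵀ ∧ LE (P * H * Qᵀ) = Q * LE H * Qᵀ := by
  obtain rfl : AE = overlapMatrix := funext hAE
  obtain rfl : LE = fun A => normalizedLaplacian (overlapMatrix A) := funext hLE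
  subst hP hQ
  simp only [permMatrix_mul_mul_transpose_permMatrix, overlapMatrix_submatrix,
    normalizedLaplacian_submatrix, and_self]

/-- Equivariance of the size-normalised overlap matrix
`A_E(H) = offdiag(D_E(H)^{-1/2} Hᵀ H D_E(H)^{-1/2})` and the normalised hyperedge-overlap
Laplacian `L_E(H) = I - D_ov(H)^{-1/2} A_E(H) D_ov(H)^{-1/2}` under independent row and column
permutations: `A_E(P H Qᵀ) = Q A_E(H) Qᵀ` and `L_E(P H Qᵀ) = Q L_E(H) Qᵀ`. -/
theorem overlap_laplacian_equivariant {n m : ℕ}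
    (H : Matrix (Fin n) (Fin m) ℝ)
    (hbin : ∀ i j, H i j = 0 ∨ H i j = 1)
    (hcol : ∀ j, 0 < ∑ i, H i j)
    (σ : Equiv.Perm (Fin n)) (τ : Equiv.Perm (Fin m))
    (P : Matrix (Fin n) (Fin n) ℝ) (Q : Matrix (Fin m) (Fin m) ℝ)
    (hP : P = σ.permMatrix ℝ) (hQ : Q = τ.permMatrix ℝ)
    (AE : Matrix (Fin n) (Fin m) ℝ → Matrix (Fin m) (Fin m) ℝ)
    (hAE : ∀ A : Matrix (Fin n) (Fin m) ℝ,
      AE A = Matrix.of (fun j k =>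
        if j = k then 0 else
          (Matrix.diagonal (fun j => 1 / Real.sqrt (∑ i, A i j)) * (Aᵀ * A) *
            Matrix.diagonal (fun j => 1 / Real.sqrt (∑ i, A i j))) j k))
    (LE : Matrix (Fin n) (Fin m) ℝ → Matrix (Fin m) (Fin m) ℝ)
    (hLE : ∀ A : Matrix (Fin n) (Fin m) ℝ,
      LE A = 1 -
        Matrix.diagonal (fun j =>
            if 0 < ∑ k, AE A j k then 1 / Real.sqrt (∑ k, AE A j k) else 0) * AE A *
          Matrix.diagonal (fun j =>
            if 0 < ∑ k, AE A j k then 1 / Real.sqrt (∑ k, AE A j k) else 0)) :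
    AE (P * H * Qᵀ) = Q * AE H * Qᵀ ∧ LE (P * H * Qᵀ) = Q * LE H * Qᵀ :=
  overlap_laplacian_equivariant_general H σ τ P Q hP hQ AE hAE LE hLE
end

section
/- Let P ∈ ℝ^{n×n} and Q ∈ ℝ^{m×m} be permutation matrices, let σ be a permutation of {1, …, N}, let p₁, …, p_N : ℝ^{n×m} → ℝ be strictly positive functions, and let u₁, …, u_N : ℝ^{n×m} → ℝ^{n×m} be drift fields, satisfying the compatibility relations p_i(P·X·Qᵀ) = p_{σ(i)}(X) and u_i(P·X·Qᵀ) = P·u_{σ(i)}(X)·Qᵀ for all i and all X ∈ ℝ^{n×m}. Define the marginal density p̂(X) := (1/N)·Σ_{i=1}^N p_i(X), the posterior weights π_i(X) := p_i(X) / Σ_{j=1}^N p_j(X), and the posterior-averaged drift û(X) := Σ_{i=1}^N π_i(X)·u_i(X). Then: (i) p̂ is invariant, p̂(P·X·Qᵀ) = p̂(X) for all X; and (ii) û is equivariant, û(P·X·Qᵀ) = P·û(X)·Qᵀ for all X. -/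
open Matrix

/-!
Relabelling the input by `X ↦ P X Qᵀ` only permutes the family `(pᵢ, uᵢ)` by `σ`, up to applying
the linear map `X ↦ P X Qᵀ` to the drifts. A sum over all indices does not see the permutation, so
the total mass `Σⱼ pⱼ` is invariant, and the posterior average, being linear in the drifts with
invariant weights, is carried along by the linear map.
-/

section PosteriorAverage

variable {ι α K M : Type*} [Fintype ι] [AddCommMonoid M]

theorem sum_apply_eq_of_perm (σ : Equiv.Perm ι) (f : ι → α → M) (g : α → α)
    (h : ∀ i x, f i (g x) = f (σ i) x) (x : α) :
    ∑ i, f i (g x) = ∑ i, f i x := by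
  simp only [h]
  exact Equiv.sum_comp σ (f · x)

variable [Field K] [Module K M]

def posteriorAverage (w : ι → α → K) (u : ι → α → M) (x : α) : M :=
  ∑ i, (w i x / ∑ j, w j x) • u i x

theorem posteriorAverage_apply_eq_of_perm (σ : Equiv.Perm ι) (g : α → α) (L : M →ₗ[K] M)
    (w : ι → α → K) (u : ι → α → M) (hw : ∀ i x, w i (g x) = w (σ i) x)
    (hu : ∀ i x, u i (g x) = L (u (σ i) x)) (x : α) :
    posteriorAverage w u (g x) = L (posteriorAverage w u x) := by
  have hmass := sum_apply_eq_of_perm σ w g hw x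
  calc posteriorAverage w u (g x)
      = ∑ i, (w (σ i) x / ∑ j, w j x) • L (u (σ i) x) := by
        rw [posteriorAverage, hmass]
        simp only [hw, hu]
    _ = ∑ i, (w i x / ∑ j, w j x) • L (u i x) :=
        Equiv.sum_comp σ fun i => (w i x / ∑ j, w j x) • L (u i x)
    _ = L (posteriorAverage w u x) := by
        simp only [posteriorAverage, map_sum, map_smul]

end PosteriorAverage

def Matrix.mulLeftRightLinearMap {R k l n o : Type*} [CommSemiring R] [Fintype l] [Fintype n]
    (A : Matrix k l R) (B : Matrix n o R) : Matrix l n R →ₗ[R] Matrix k o R where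
  toFun X := A * X * B
  map_add' X Y := by rw [Matrix.mul_add, Matrix.add_mul]
  map_smul' c X := by rw [Matrix.mul_smul, Matrix.smul_mul, RingHom.id_apply]

theorem posterior_averaged_drift_equivariant_general {n m N : ℕ}
    (P : Matrix (Fin n) (Fin n) ℝ) (Q : Matrix (Fin m) (Fin m) ℝ)
    (σ : Equiv.Perm (Fin N))
    (p : Fin N → Matrix (Fin n) (Fin m) ℝ → ℝ)
    (u : Fin N → Matrix (Fin n) (Fin m) ℝ → Matrix (Fin n) (Fin m) ℝ)
    (hpcompat : ∀ i X, p i (P * X * Qᵀ) = p (σ i) X)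
    (hucompat : ∀ i X, u i (P * X * Qᵀ) = P * u (σ i) X * Qᵀ)
    (phat : Matrix (Fin n) (Fin m) ℝ → ℝ)
    (hphat : phat = fun X => (1 / (N : ℝ)) * ∑ i, p i X)
    (uhat : Matrix (Fin n) (Fin m) ℝ → Matrix (Fin n) (Fin m) ℝ)
    (huhat : uhat = fun X => ∑ i, (p i X / ∑ j, p j X) • u i X) :
    (∀ X, phat (P * X * Qᵀ) = phat X) ∧
    (∀ X, uhat (P * X * Qᵀ) = P * uhat X * Qᵀ) := by
  subst hphat huhat
  refine ⟨fun X => ?_, fun X => ?_⟩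
  · exact congrArg (1 / (N : ℝ) * ·)
      (sum_apply_eq_of_perm σ p (P * · * Qᵀ) hpcompat X)
  · exact posteriorAverage_apply_eq_of_perm σ (P * · * Qᵀ) (mulLeftRightLinearMap P Qᵀ)
      p u hpcompat hucompat X

/-- Equivariance of the posterior-averaged drift: if the densities and drift fields satisfy
`p_i(P X Qᵀ) = p_{σ(i)}(X)` and `u_i(P X Qᵀ) = P u_{σ(i)}(X) Qᵀ` for a permutation `σ` of the
data index, then the marginal `p̂ = (1/N) Σᵢ pᵢ` is invariant, `p̂(P X Qᵀ) = p̂(X)`, and the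
posterior-averaged drift `û(X) = Σᵢ πᵢ(X) uᵢ(X)` is equivariant, `û(P X Qᵀ) = P û(X) Qᵀ`. -/
theorem posterior_averaged_drift_equivariant {n m N : ℕ}
    (ρ : Equiv.Perm (Fin n)) (ν : Equiv.Perm (Fin m))
    (P : Matrix (Fin n) (Fin n) ℝ) (Q : Matrix (Fin m) (Fin m) ℝ)
    (hP : P = ρ.permMatrix ℝ) (hQ : Q = ν.permMatrix ℝ)
    (σ : Equiv.Perm (Fin N))
    (p : Fin N → Matrix (Fin n) (Fin m) ℝ → ℝ)
    (hpos : ∀ i X, 0 < p i X)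
    (u : Fin N → Matrix (Fin n) (Fin m) ℝ → Matrix (Fin n) (Fin m) ℝ)
    (hpcompat : ∀ i X, p i (P * X * Qᵀ) = p (σ i) X)
    (hucompat : ∀ i X, u i (P * X * Qᵀ) = P * u (σ i) X * Qᵀ)
    (phat : Matrix (Fin n) (Fin m) ℝ → ℝ)
    (hphat : phat = fun X => (1 / (N : ℝ)) * ∑ i, p i X)
    (uhat : Matrix (Fin n) (Fin m) ℝ → Matrix (Fin n) (Fin m) ℝ)
    (huhat : uhat = fun X => ∑ i, (p i X / ∑ j, p j X) • u i X) :
    (∀ X, phat (P * X * Qᵀ) = phat X) ∧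
    (∀ X, uhat (P * X * Qᵀ) = P * uhat X * Qᵀ) :=
  posterior_averaged_drift_equivariant_general P Q σ p u hpcompat hucompat phat hphat uhat huhat
end
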